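/- For each finite cardinality n + 1, there are, up to isomorphism of symmetric simplicial sets, only finitely many partial groups X with |X_1| = n + 1. -/

import Mathlib

/-- A symmetric (simplicial) set: a functor `Υᵒᵖ → Set`, where `Υ` has objects
`[n] = {0,…,n}` (encoded as `Fin (n+1)`) and all functions as morphisms.
For `α : [m] → [n]` and `x ∈ X_n`, `act α x` is `x · α ∈ X_m`. -/
structure SymSet where
  obj : ℕ → Type
  act : ∀ {m n : ℕ}, (Fin (m + 1) → Fin (n + 1)) → obj n → obj m
  act_id : ∀ {n : ℕ} (x : obj n), act id x = x
  act_comp : ∀ {m n k : ℕ} (α : Fin (m + 1) → Fin (n + 1)) (β : Fin (n + 1) → Fin (k + 1))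
      (x : obj k), act α (act β x) = act (β ∘ α) x

namespace SymSet

/-- `x_{ij} ∈ X_1`, the action on `x ∈ X_n` of the map `[1] → [n]` with `0 ↦ i`, `1 ↦ j`. -/
def edge (X : SymSet) {n : ℕ} (i j : Fin (n + 1)) (x : X.obj n) : X.obj 1 :=
  X.act (fun t : Fin 2 => if t = 0 then i else j) x

/-- The domain of an edge, its image under `ι₀ : [0] → [1]`, `0 ↦ 0`. -/
def edgeDom (X : SymSet) (f : X.obj 1) : X.obj 0 :=
  X.act (fun _ : Fin 1 => (0 : Fin 2)) f

/-- The codomain of an edge, its image under `ι₁ : [0] → [1]`, `0 ↦ 1`. -/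
def edgeCod (X : SymSet) (f : X.obj 1) : X.obj 0 :=
  X.act (fun _ : Fin 1 => (1 : Fin 2)) f

/-- The identity edge `id_a` on an object `a ∈ X_0`, induced by the unique map `[1] → [0]`. -/
def identityEdge (X : SymSet) (a : X.obj 0) : X.obj 1 :=
  X.act (fun _ : Fin 2 => (0 : Fin 1)) a

/-- An edge is an identity if it is in the image of `X_0 → X_1`. -/
def IsIdentityEdge (X : SymSet) (f : X.obj 1) : Prop :=
  ∃ a : X.obj 0, f = X.identityEdge a

/-- The tuple of edges `x_{ij}` (for `i < j` an edge `{i,j}` of the spine `T`)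
associated to an `n`-simplex `x`. -/
def spineTuple (X : SymSet) {n : ℕ} (T : SimpleGraph (Fin (n + 1))) (x : X.obj n) :
    ∀ i j : Fin (n + 1), i < j → T.Adj i j → X.obj 1 :=
  fun i j _ _ => X.edge i j x

/-- Membership in `lim_T X`: the components have matching endpoints. -/
def IsSpineLim (X : SymSet) {n : ℕ} (T : SimpleGraph (Fin (n + 1)))
    (e : ∀ i j : Fin (n + 1), i < j → T.Adj i j → X.obj 1) : Prop :=
  ∃ v : Fin (n + 1) → X.obj 0, ∀ (i j : Fin (n + 1)) (hlt : i < j) (h : T.Adj i j),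
    X.edgeDom (e i j hlt h) = v i ∧ X.edgeCod (e i j hlt h) = v j

/-- The limit `lim_T X` of the diagram associated to a spine `T`. -/
def SpineLim (X : SymSet) {n : ℕ} (T : SimpleGraph (Fin (n + 1))) : Type :=
  { e : ∀ i j : Fin (n + 1), i < j → T.Adj i j → X.obj 1 // X.IsSpineLim T e }

lemma spineTuple_isSpineLim (X : SymSet) {n : ℕ} (T : SimpleGraph (Fin (n + 1)))
    (x : X.obj n) : X.IsSpineLim T (X.spineTuple T x) := by
  refine ⟨fun i => X.act (fun _ : Fin 1 => i) x, fun i j hlt h => ⟨?_, ?_⟩⟩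
  · show X.act _ (X.act _ x) = _
    rw [X.act_comp]
    show X.act ((fun t : Fin 2 => if t = 0 then i else j) ∘ fun _ : Fin 1 => 0) x
      = X.act (fun _ : Fin 1 => i) x
    congr 1
  · show X.act _ (X.act _ x) = _
    rw [X.act_comp]
    show X.act ((fun t : Fin 2 => if t = 0 then i else j) ∘ fun _ : Fin 1 => 1) x
      = X.act (fun _ : Fin 1 => j) x
    congr 1

/-- The map `𝓔_T : X_n → lim_T X`. -/
def spineMap (X : SymSet) {n : ℕ} (T : SimpleGraph (Fin (n + 1))) (x : X.obj n) :
    X.SpineLim T :=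
  ⟨X.spineTuple T x, X.spineTuple_isSpineLim T x⟩

/-- A symmetric set is *spiny* if `𝓔_T` is injective for every `n ≥ 1` and
every spine `T` of `[n]` (a tree with vertex set `[n]`). -/
def Spiny (X : SymSet) : Prop :=
  ∀ n : ℕ, 1 ≤ n → ∀ T : SimpleGraph (Fin (n + 1)), T.IsTree →
    Function.Injective (X.spineMap T)

/-- An element `x ∈ X_n` is degenerate if `x = y · σ` for some noninvertible
surjection `σ : [n] → [k]`. -/
def Degenerate (X : SymSet) {n : ℕ} (x : X.obj n) : Prop :=
  ∃ (k : ℕ) (σ : Fin (n + 1) → Fin (k + 1)) (y : X.obj k),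
    Function.Surjective σ ∧ ¬ Function.Bijective σ ∧ x = X.act σ y

/-- A symmetric subset (subfunctor) of `X`. -/
structure SymSubset (X : SymSet) where
  carrier : ∀ n : ℕ, Set (X.obj n)
  act_mem : ∀ {m n : ℕ} (α : Fin (m + 1) → Fin (n + 1)) {x : X.obj n},
    x ∈ carrier n → X.act α x ∈ carrier m

/-- `X` is `n`-skeletal: the smallest symmetric subset of `X` containing all
of its `n`-simplices is all of `X`. -/
def IsSkeletal (X : SymSet) (n : ℕ) : Prop :=
  ∀ Y : SymSubset X, (∀ x : X.obj n, x ∈ Y.carrier n) →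
    ∀ (m : ℕ) (x : X.obj m), x ∈ Y.carrier m

/-- `X` has dimension `n`: it is `n`-skeletal but not `k`-skeletal for `k < n`
(for `n ≥ 1` this is equivalent to not being `(n-1)`-skeletal). -/
def HasDim (X : SymSet) (n : ℕ) : Prop :=
  X.IsSkeletal n ∧ ∀ k : ℕ, k < n → ¬ X.IsSkeletal k

/-- Two objects are related if there is an edge between them (in either direction). -/
def EdgeRel (X : SymSet) (a b : X.obj 0) : Prop :=
  ∃ f : X.obj 1, (X.edgeDom f = a ∧ X.edgeCod f = b) ∨ (X.edgeDom f = b ∧ X.edgeCod f = a)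

/-- `X` is connected: it is nonempty and any two objects are joined by a
zig-zag of edges. -/
def Connected (X : SymSet) : Prop :=
  Nonempty (X.obj 0) ∧ ∀ a b : X.obj 0, Relation.ReflTransGen X.EdgeRel a b

/-- `n_a`: the number of nonidentity edges with domain `a`. -/
noncomputable def nEdges (X : SymSet) (a : X.obj 0) : ℕ :=
  Nat.card { f : X.obj 1 // X.edgeDom f = a ∧ ¬ X.IsIdentityEdge f }

/-- `p(X)`: the maximum of the `n_a` over all objects `a`. -/
noncomputable def pVal (X : SymSet) : ℕ := ⨆ a : X.obj 0, X.nEdges a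

/-- A map of symmetric sets (a natural transformation). -/
structure SymMap (X Y : SymSet) where
  app : ∀ n : ℕ, X.obj n → Y.obj n
  naturality : ∀ {m n : ℕ} (α : Fin (m + 1) → Fin (n + 1)) (x : X.obj n),
    app m (X.act α x) = Y.act α (app n x)

/-- A map of symmetric sets is an isomorphism iff it is levelwise bijective. -/
def SymMap.IsIso {X Y : SymSet} (F : SymMap X Y) : Prop :=
  ∀ n : ℕ, Function.Bijective (F.app n)

/-- `X` and `Y` are isomorphic symmetric sets. -/
def Isomorphic (X Y : SymSet) : Prop := ∃ F : SymMap X Y, F.IsIso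

/-- The Bousfield–Segal map `𝓑_m : X_m → X_1^m`, `x ↦ (x_{01}, x_{02}, …, x_{0m})`. -/
def bousfield (X : SymSet) {m : ℕ} (x : X.obj m) : Fin m → X.obj 1 :=
  fun i => X.edge 0 i.succ x

/-- `X` is spiny in degrees below `q`: `𝓔_T` is injective for every spine `T`
of `[n]` for each `1 ≤ n ≤ q`. -/
def SpinyBelow (X : SymSet) (q : ℕ) : Prop :=
  ∀ n : ℕ, 1 ≤ n → n ≤ q → ∀ T : SimpleGraph (Fin (n + 1)), T.IsTree →
    Function.Injective (X.spineMap T)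

/-- `X` is a groupoid: `𝓔_T : X_n → lim_T X` is a bijection for every `n ≥ 1`
and every spine `T` of `[n]`. -/
def IsGroupoid (X : SymSet) : Prop :=
  ∀ n : ℕ, 1 ≤ n → ∀ T : SimpleGraph (Fin (n + 1)), T.IsTree →
    Function.Bijective (X.spineMap T)

/-- `X` is reduced: `X_0` is a singleton. -/
def Reduced (X : SymSet) : Prop := Nonempty (X.obj 0) ∧ Subsingleton (X.obj 0)

/-- A partial group is a reduced spiny symmetric set. -/
def IsPartialGroup (X : SymSet) : Prop := X.Reduced ∧ X.Spiny

/-- The levelwise product of two symmetric sets. -/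
def prod (X Y : SymSet) : SymSet where
  obj n := X.obj n × Y.obj n
  act α p := (X.act α p.1, Y.act α p.2)
  act_id p := by cases p with | mk a b => simp only [X.act_id, Y.act_id]
  act_comp α β p := by cases p with | mk a b => simp only [X.act_comp, Y.act_comp]

end SymSet

/-!
The edges `x ↦ (x_{ij})` embed a spiny symmetric set `X` into the symmetric set of
`X_1`-valued matrices: in positive degree already the star spine at `0` detects `x`, and
`X_0` is a retract of `X_1`. If `|X_1| = n + 1`, two of the `m + 2 > n + 1` edges `x_{0d}` of an
`(m + 1)`-simplex coincide, which makes `x` a degeneracy of an `m`-simplex. So the image of `X`,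
after identifying `X_1` with `Fin (n + 1)`, is determined by its finitely many possible values
in degrees `≤ n`, and spiny symmetric sets with the same image are isomorphic.
-/

namespace SymSet

/-- Every spiny symmetric set `X` embeds into this one via `x ↦ (x_{ij})`, once `X_1` is
identified with `S`. -/
def edgeMatrices (S : Type) : SymSet where
  obj m := Fin (m + 1) → Fin (m + 1) → S
  act α f i j := f (α i) (α j)
  act_id _ := rfl
  act_comp _ _ _ := rfl

variable {X : SymSet}

lemma edge_act {m k : ℕ} (α : Fin (m + 1) → Fin (k + 1)) (i j : Fin (m + 1)) (x : X.obj k) :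
    X.edge i j (X.act α x) = X.edge (α i) (α j) x := by
  simp only [edge, X.act_comp]
  congr 1
  funext t
  by_cases ht : t = 0 <;> simp [ht]

lemma edge_zero_zero_injective : Function.Injective (X.edge (0 : Fin 1) 0) := by
  have hretract : ∀ a, X.edgeDom (X.edge 0 0 a) = a := fun a => by
    simp only [edgeDom, edge, X.act_comp]
    exact (congrArg (X.act · a) (Subsingleton.elim (α := Fin 1 → Fin 1) _ id)).trans (X.act_id a)
  exact Function.LeftInverse.injective hretract

lemma eq_of_edge_zero_eq (hX : X.Spiny) {m : ℕ} (hm : 1 ≤ m) {x y : X.obj m}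
    (h : ∀ d, X.edge 0 d x = X.edge 0 d y) : x = y := by
  refine hX m hm _ (SimpleGraph.isTree_starGraph 0) (Subtype.ext ?_)
  funext i j hij hadj
  obtain rfl : i = 0 := by
    rcases (SimpleGraph.starGraph_adj.mp hadj).2 with rfl | rfl
    · rfl
    · exact absurd hij (Fin.not_lt_zero i)
  exact h j

def edgeMatrix {S : Type} (e : X.obj 1 ≃ S) : SymMap X (edgeMatrices S) where
  app _ x i j := e (X.edge i j x)
  naturality α x := by
    funext i j
    exact congrArg e (edge_act α i j x)

lemma edgeMatrix_injective (hX : X.Spiny) {S : Type} (e : X.obj 1 ≃ S) (m : ℕ) :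
    Function.Injective ((X.edgeMatrix e).app m) := by
  intro x y hxy
  have hedge : ∀ i j, X.edge i j x = X.edge i j y := fun i j =>
    e.injective (congrFun (congrFun hxy i) j)
  rcases m with _ | m
  · exact edge_zero_zero_injective (hedge 0 0)
  · exact eq_of_edge_zero_eq hX (Nat.le_add_left 1 m) (hedge 0)

/-- Two of the `m + 2` edges `x_{0d}` agree, say `x_{0b} = x_{0c}` with `c ≠ 0`; then `x`
is fixed by the map collapsing `c` onto `b`, which factors through `[m]`. -/
lemma exists_eq_act_of_card_lt (hX : X.Spiny) [Finite (X.obj 1)] {m : ℕ}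
    (hm : Nat.card (X.obj 1) < m + 2) (x : X.obj (m + 1)) :
    ∃ (σ : Fin (m + 2) → Fin (m + 1)) (y : X.obj m), x = X.act σ y := by
  obtain ⟨b, c, hbc, hc0, hedge⟩ :
      ∃ b c : Fin (m + 2), b ≠ c ∧ c ≠ 0 ∧ X.edge 0 c x = X.edge 0 b x := by
    have hninj : ¬ Function.Injective (fun d => X.edge 0 d x) := fun hinj => by
      have := Nat.card_le_card_of_injective _ hinj
      rw [Nat.card_fin] at this
      omega
    obtain ⟨b, c, heq, hne⟩ := Function.not_injective_iff.mp hninj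
    rcases eq_or_ne c 0 with rfl | hc0
    · exact ⟨0, b, hne.symm, hne, heq⟩
    · exact ⟨b, c, hne, hc0, heq.symm⟩
  have hτx : X.act (Function.update id c b) x = x := by
    refine eq_of_edge_zero_eq hX (Nat.le_add_left 1 m) fun d => ?_
    rw [edge_act, Function.update_of_ne hc0.symm]
    rcases eq_or_ne d c with rfl | hdc
    · rw [Function.update_self, id, hedge]
    · rw [Function.update_of_ne hdc]
      rfl
  have hτc : ∀ d, Function.update id c b d ≠ c := fun d => by
    rcases eq_or_ne d c with rfl | hdc
    · simpa using hbc
    · simp [hdc]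
  choose σ hσ using fun d => Fin.exists_succAbove_eq (hτc d)
  refine ⟨σ, X.act c.succAbove x, ?_⟩
  rw [X.act_comp, show c.succAbove ∘ σ = Function.update id c b from funext hσ, hτx]

lemma SymMap.range_app_succ {Z : SymSet} (F : SymMap X Z) {m : ℕ}
    (hX : ∀ x : X.obj (m + 1), ∃ (σ : Fin (m + 2) → Fin (m + 1)) (y : X.obj m), x = X.act σ y) :
    Set.range (F.app (m + 1)) =
      ⋃ σ : Fin (m + 2) → Fin (m + 1), Z.act σ '' Set.range (F.app m) := by
  ext z
  simp only [Set.mem_range, Set.mem_iUnion, Set.mem_image, exists_exists_eq_and]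
  constructor
  · rintro ⟨x, rfl⟩
    obtain ⟨σ, y, rfl⟩ := hX x
    exact ⟨σ, y, (F.naturality σ y).symm⟩
  · rintro ⟨σ, y, rfl⟩
    exact ⟨X.act σ y, F.naturality σ y⟩

lemma SymMap.range_app_eq_of_forall_le {Y Z : SymSet} (F : SymMap X Z) (G : SymMap Y Z) {n : ℕ}
    (hX : ∀ m, n ≤ m → ∀ x : X.obj (m + 1), ∃ (σ : Fin (m + 2) → Fin (m + 1)) (y : X.obj m),
      x = X.act σ y)
    (hY : ∀ m, n ≤ m → ∀ y : Y.obj (m + 1), ∃ (σ : Fin (m + 2) → Fin (m + 1)) (z : Y.obj m),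
      y = Y.act σ z)
    (h : ∀ k ≤ n, Set.range (F.app k) = Set.range (G.app k)) (m : ℕ) :
    Set.range (F.app m) = Set.range (G.app m) := by
  induction m with
  | zero => exact h 0 (Nat.zero_le n)
  | succ m ih =>
    by_cases hm : m + 1 ≤ n
    · exact h (m + 1) hm
    · rw [F.range_app_succ (hX m (by omega)), G.range_app_succ (hY m (by omega)), ih]

lemma isomorphic_of_range_eq {Y Z : SymSet} (F : SymMap X Z) (G : SymMap Y Z)
    (hF : ∀ m, Function.Injective (F.app m)) (hG : ∀ m, Function.Injective (G.app m))
    (h : ∀ m, Set.range (F.app m) = Set.range (G.app m)) : Isomorphic X Y := by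
  let φ m : X.obj m ≃ Y.obj m := (Equiv.ofInjective _ (hF m)).trans
    ((Equiv.setCongr (h m)).trans (Equiv.ofInjective _ (hG m)).symm)
  have hGφ : ∀ m x, G.app m (φ m x) = F.app m x := fun m x =>
    Equiv.apply_ofInjective_symm (hG m) _
  refine ⟨⟨fun m => φ m, fun α x => hG _ ?_⟩, fun m => (φ m).bijective⟩
  rw [hGφ, G.naturality, hGφ, F.naturality]

end SymSet

/-- up to isomorphism there are only finitely many partial groups with
`|X_1| = n + 1`. -/
theorem stmt16 (n : ℕ) :
    ∃ (ι : Type) (_ : Finite ι) (F : ι → SymSet),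
      ∀ X : SymSet, X.IsPartialGroup → Nat.card (X.obj 1) = n + 1 →
        ∃ i : ι, SymSet.Isomorphic X (F i) := by
  have degenerate (X : SymSet) (hX : X.Spiny) (e : X.obj 1 ≃ Fin (n + 1)) (m : ℕ) (hm : n ≤ m)
      (x : X.obj (m + 1)) : ∃ (σ : Fin (m + 2) → Fin (m + 1)) (y : X.obj m), x = X.act σ y :=
    have : Finite (X.obj 1) := .of_equiv _ e.symm
    SymSet.exists_eq_act_of_card_lt hX (by rw [Nat.card_congr e, Nat.card_fin]; omega) x
  let code (X : SymSet) (e : X.obj 1 ≃ Fin (n + 1)) (k : Fin (n + 1)) :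
      Set (Fin (k + 1) → Fin (k + 1) → Fin (n + 1)) :=
    Set.range ((X.edgeMatrix e).app k)
  let ι := {c // ∃ (X : SymSet) (e : X.obj 1 ≃ Fin (n + 1)), X.Spiny ∧ code X e = c}
  refine ⟨ι, inferInstance, fun c => c.2.choose, fun X hX hcard => ?_⟩
  have : Finite (X.obj 1) := Nat.finite_of_card_ne_zero (by omega)
  let e := Finite.equivFinOfCardEq hcard
  let c : ι := ⟨code X e, X, e, hX.2, rfl⟩
  obtain ⟨e', hY, hcode⟩ := c.2.choose_spec
  refine ⟨c, SymSet.isomorphic_of_range_eq _ _ (SymSet.edgeMatrix_injective hX.2 e)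
    (SymSet.edgeMatrix_injective hY e')
    (SymSet.SymMap.range_app_eq_of_forall_le _ _ (degenerate X hX.2 e) (degenerate _ hY e') ?_)⟩
  intro k hk
  exact congrFun hcode.symm ⟨k, Nat.lt_succ_of_le hk⟩
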